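/- (Proposition 2, probability part.) Consider the error system s_{k+1} = A_K s_k + w_k with deterministic initial condition s_0 ∈ ℝⁿ, where w_0, w_1, … : Ω → ℝⁿ are independent random vectors with finite second moments, each with mean μ_ω ∈ ℝⁿ and positive definite covariance matrix Σ_ω. Let ε ∈ (0,1) and define the sets R^ε_0 = {s_0} and R^ε_{k+1} = A_K R^ε_k ⊕ E(Σ_ω, μ_ω, n/ε). Then for every k ≥ 1, P(s_k ∈ R^ε_k) ≥ 1 − ε. -/

import Mathlib

open MeasureTheory Matrix Pointwise
open scoped Classical

/-- The positive semidefinite square root of a matrix (junk value `0` if the matrix is not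
positive semidefinite). -/
noncomputable def msqrt {n : ℕ} (M : Matrix (Fin n) (Fin n) ℝ) : Matrix (Fin n) (Fin n) ℝ :=
  if h : M.PosSemidef then
    h.1.eigenvectorUnitary.1 * diagonal ((↑) ∘ (√·) ∘ h.1.eigenvalues) *
      (star h.1.eigenvectorUnitary : Matrix (Fin n) (Fin n) ℝ)
  else 0

/-- The ellipsoid `E(M, c, r) = {c + M^{1/2} x : xᵀ x ≤ r}` with shape matrix `M`,
center `c` and radius `√r`. -/
noncomputable def ellipsoid {n : ℕ} (M : Matrix (Fin n) (Fin n) ℝ) (c : Fin n → ℝ) (r : ℝ) :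
    Set (Fin n → ℝ) :=
  {x | ∃ y : Fin n → ℝ, y ⬝ᵥ y ≤ r ∧ x = c + (msqrt M).mulVec y}

section Helpers
variable {n : ℕ}

lemma psd_dot {M : Matrix (Fin n) (Fin n) ℝ} (hM : M.PosSemidef) (x : Fin n → ℝ) :
    0 ≤ x ⬝ᵥ M.mulVec x := by
  simpa using hM.dotProduct_mulVec_nonneg x

lemma herm_transpose {M : Matrix (Fin n) (Fin n) ℝ} (h : M.IsHermitian) : Mᵀ = M := by
  simpa [Matrix.conjTranspose_eq_transpose_of_trivial] using h.eq

lemma msqrt_mul_self {M : Matrix (Fin n) (Fin n) ℝ} (hM : M.PosSemidef) :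
    msqrt M * msqrt M = M := by
  rw [msqrt, dif_pos hM]
  have hUU : (star hM.1.eigenvectorUnitary : Matrix (Fin n) (Fin n) ℝ) *
      hM.1.eigenvectorUnitary.1 = 1 := Unitary.coe_star_mul_self _
  have hspec := hM.1.spectral_theorem
  rw [Unitary.conjStarAlgAut_apply] at hspec
  conv_rhs => rw [hspec]
  simp only [mul_assoc]
  rw [← mul_assoc (star hM.1.eigenvectorUnitary : Matrix (Fin n) (Fin n) ℝ), hUU, one_mul,
    ← mul_assoc (diagonal _), diagonal_mul_diagonal]
  congr 3
  funext i
  simp [Real.mul_self_sqrt (hM.eigenvalues_nonneg i)]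

lemma msqrt_posSemidef {M : Matrix (Fin n) (Fin n) ℝ} (hM : M.PosSemidef) :
    (msqrt M).PosSemidef := by
  rw [msqrt, dif_pos hM]
  have hD : (diagonal ((↑) ∘ (√·) ∘ hM.1.eigenvalues) : Matrix (Fin n) (Fin n) ℝ).PosSemidef := by
    rw [posSemidef_diagonal_iff]; intro i; simp [Real.sqrt_nonneg]
  have := hD.mul_mul_conjTranspose_same hM.1.eigenvectorUnitary.1
  simpa [Matrix.star_eq_conjTranspose] using this

lemma msqrt_transpose {M : Matrix (Fin n) (Fin n) ℝ} (hM : M.PosSemidef) :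
    (msqrt M)ᵀ = msqrt M :=
  herm_transpose (msqrt_posSemidef hM).isHermitian

lemma msqrt_zero : msqrt (0 : Matrix (Fin n) (Fin n) ℝ) = 0 := by
  rw [msqrt, dif_pos Matrix.PosSemidef.zero]
  have h0 := (Matrix.PosSemidef.zero (n := Fin n) (R := ℝ)).1.eigenvalues_eq_zero_iff.mpr rfl
  have : ((↑) ∘ (√·) ∘ (Matrix.PosSemidef.zero (n := Fin n) (R := ℝ)).1.eigenvalues : Fin n → ℝ) = 0 := by
    funext i; simp [h0]
  rw [this]
  simp

lemma dot_symm_mulVec {S : Matrix (Fin n) (Fin n) ℝ} (hS : Sᵀ = S) (x y : Fin n → ℝ) :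
    (S.mulVec x) ⬝ᵥ y = x ⬝ᵥ (S.mulVec y) := by
  rw [Matrix.dotProduct_mulVec, ← Matrix.mulVec_transpose, hS]

lemma msqrt_isUnit {M : Matrix (Fin n) (Fin n) ℝ} (hM : M.PosDef) :
    IsUnit (msqrt M).det := by
  have h2 : (msqrt M).det * (msqrt M).det = M.det := by
    rw [← Matrix.det_mul, msqrt_mul_self hM.posSemidef]
  have : (msqrt M).det ≠ 0 := by
    intro h; rw [h, mul_zero] at h2; exact hM.det_pos.ne' h2.symm
  exact isUnit_iff_ne_zero.mpr this

lemma mem_ellipsoid_of_quad {M : Matrix (Fin n) (Fin n) ℝ} (hM : M.PosDef)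
    {r : ℝ} (x c : Fin n → ℝ)
    (h : (x - c) ⬝ᵥ (M⁻¹).mulVec (x - c) ≤ r) : x ∈ ellipsoid M c r := by
  set S := msqrt M with hSdef
  have hS2 : S * S = M := msqrt_mul_self hM.posSemidef
  have hSt : Sᵀ = S := msqrt_transpose hM.posSemidef
  have hU : IsUnit S.det := msqrt_isUnit hM
  refine ⟨S⁻¹.mulVec (x - c), ?_, ?_⟩
  · have hsymm : (S⁻¹)ᵀ = S⁻¹ := by rw [Matrix.transpose_nonsing_inv, hSt]
    calc S⁻¹.mulVec (x - c) ⬝ᵥ S⁻¹.mulVec (x - c)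
        = (x - c) ⬝ᵥ S⁻¹.mulVec (S⁻¹.mulVec (x - c)) := dot_symm_mulVec hsymm _ _
      _ = (x - c) ⬝ᵥ (M⁻¹).mulVec (x - c) := by
          rw [Matrix.mulVec_mulVec, ← Matrix.mul_inv_rev, hS2]
      _ ≤ r := h
  · rw [Matrix.mulVec_mulVec, Matrix.mul_nonsing_inv _ hU, Matrix.one_mulVec]
    abel

lemma ellipsoid_step_subset {M S : Matrix (Fin n) (Fin n) ℝ} (hM : M.PosSemidef) (hS : S.PosDef)
    (A : Matrix (Fin n) (Fin n) ℝ) (c μ : Fin n → ℝ) {r : ℝ} :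
    ellipsoid (A * M * Aᵀ + S) (A.mulVec c + μ) r ⊆
      A.mulVec '' ellipsoid M c r + ellipsoid S μ r := by
  have hAMA : (A * M * Aᵀ).PosSemidef := by
    have := hM.mul_mul_conjTranspose_same A
    rwa [Matrix.conjTranspose_eq_transpose_of_trivial] at this
  have hQ : (A * M * Aᵀ + S).PosDef := Matrix.PosDef.posSemidef_add hAMA hS
  set Q := A * M * Aᵀ + S with hQdef
  set T := msqrt Q with hTdef
  have hT2 : T * T = Q := msqrt_mul_self hQ.posSemidef
  have hTt : Tᵀ = T := msqrt_transpose hQ.posSemidef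
  have hTU : IsUnit T.det := msqrt_isUnit hQ
  rintro x ⟨u, hu, rfl⟩
  set v := T⁻¹.mulVec u with hvdef
  have hTv : T.mulVec v = u := by
    rw [hvdef, Matrix.mulVec_mulVec, Matrix.mul_nonsing_inv _ hTU, Matrix.one_mulVec]
  clear_value v
  have hvQv : v ⬝ᵥ Q.mulVec v = u ⬝ᵥ u :=
    calc v ⬝ᵥ Q.mulVec v = v ⬝ᵥ T.mulVec (T.mulVec v) := by rw [Matrix.mulVec_mulVec, hT2]
      _ = (T.mulVec v) ⬝ᵥ (T.mulVec v) := (dot_symm_mulVec hTt _ _).symm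
      _ = u ⬝ᵥ u := by rw [hTv]
  have hQv : v ⬝ᵥ Q.mulVec v = v ⬝ᵥ (A * M * Aᵀ).mulVec v + v ⬝ᵥ S.mulVec v := by
    rw [hQdef, Matrix.add_mulVec, dotProduct_add]
  set y := (msqrt M).mulVec (Aᵀ.mulVec v) with hydef
  set z := (msqrt S).mulVec v with hzdef
  have hy : y ⬝ᵥ y ≤ r := by
    have h1 : y ⬝ᵥ y = (Aᵀ.mulVec v) ⬝ᵥ M.mulVec (Aᵀ.mulVec v) := by
      rw [hydef, dot_symm_mulVec (msqrt_transpose hM), Matrix.mulVec_mulVec,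
        msqrt_mul_self hM]
    have h2 : (Aᵀ.mulVec v) ⬝ᵥ M.mulVec (Aᵀ.mulVec v) = v ⬝ᵥ (A * M * Aᵀ).mulVec v :=
      calc (Aᵀ.mulVec v) ⬝ᵥ M.mulVec (Aᵀ.mulVec v)
          = (v ᵥ* A) ⬝ᵥ (M * Aᵀ).mulVec v := by
            rw [Matrix.mulVec_mulVec, Matrix.mulVec_transpose]
        _ = ((v ᵥ* A) ᵥ* (M * Aᵀ)) ⬝ᵥ v := Matrix.dotProduct_mulVec _ _ _
        _ = (v ᵥ* (A * (M * Aᵀ))) ⬝ᵥ v := by rw [Matrix.vecMul_vecMul]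
        _ = v ⬝ᵥ (A * M * Aᵀ).mulVec v := by rw [← Matrix.dotProduct_mulVec, mul_assoc]
    calc y ⬝ᵥ y = v ⬝ᵥ (A * M * Aᵀ).mulVec v := by rw [h1, h2]
      _ ≤ v ⬝ᵥ Q.mulVec v := by
          rw [hQv]; exact le_add_of_nonneg_right (psd_dot hS.posSemidef v)
      _ = u ⬝ᵥ u := hvQv
      _ ≤ r := hu
  have hz : z ⬝ᵥ z ≤ r := by
    have h1 : z ⬝ᵥ z = v ⬝ᵥ S.mulVec v := by
      rw [hzdef, dot_symm_mulVec (msqrt_transpose hS.posSemidef), Matrix.mulVec_mulVec,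
        msqrt_mul_self hS.posSemidef]
    calc z ⬝ᵥ z = v ⬝ᵥ S.mulVec v := h1
      _ ≤ v ⬝ᵥ Q.mulVec v := by
          rw [hQv]; exact le_add_of_nonneg_left (psd_dot hAMA v)
      _ = u ⬝ᵥ u := hvQv
      _ ≤ r := hu
  have hx : (A.mulVec c + μ) + T.mulVec u
      = A.mulVec (c + (msqrt M).mulVec y) + (μ + (msqrt S).mulVec z) := by
    have hMy : (msqrt M).mulVec y = M.mulVec (Aᵀ.mulVec v) := by
      have hmm : msqrt M * (msqrt M * Aᵀ) = M * Aᵀ := by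
        rw [← mul_assoc, msqrt_mul_self hM]
      rw [hydef, Matrix.mulVec_mulVec v (msqrt M) Aᵀ, Matrix.mulVec_mulVec, hmm,
        ← Matrix.mulVec_mulVec]
    have hSz : (msqrt S).mulVec z = S.mulVec v := by
      rw [hzdef, Matrix.mulVec_mulVec, msqrt_mul_self hS.posSemidef]
    have hQu : T.mulVec u = (A * M * Aᵀ).mulVec v + S.mulVec v := by
      rw [← hTv, Matrix.mulVec_mulVec, hT2, hQdef, Matrix.add_mulVec]
    rw [Matrix.mulVec_add, hMy, hSz, hQu, Matrix.mulVec_mulVec, Matrix.mulVec_mulVec, mul_assoc]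
    abel
  rw [hx]
  exact Set.add_mem_add (Set.mem_image_of_mem _ ⟨y, hy, rfl⟩) ⟨z, hz, rfl⟩

lemma mulVec_finset_sum {ι : Type*} (F : Finset ι) (A : Matrix (Fin n) (Fin n) ℝ)
    (f : ι → Fin n → ℝ) :
    A.mulVec (∑ j ∈ F, f j) = ∑ j ∈ F, A.mulVec (f j) := by
  have := map_sum (Matrix.mulVecLin A) f F
  simpa only [Matrix.mulVecLin_apply] using this

lemma psd_finset_sum {ι : Type*} (F : Finset ι) (f : ι → Matrix (Fin n) (Fin n) ℝ)
    (hf : ∀ i ∈ F, (f i).PosSemidef) : (∑ i ∈ F, f i).PosSemidef :=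
  Finset.sum_induction f _ (fun _ _ ha hb => ha.add hb) Matrix.PosSemidef.zero hf

lemma dot_mulVec_expand (P : Matrix (Fin n) (Fin n) ℝ) (x y : Fin n → ℝ) :
    x ⬝ᵥ P.mulVec y = ∑ a : Fin n, ∑ b : Fin n, P a b * (x a * y b) := by
  simp only [dotProduct, Matrix.mulVec, Finset.mul_sum]
  exact Finset.sum_congr rfl fun a _ => Finset.sum_congr rfl fun b _ => by ring

end Helpers

lemma memL2_integrable_mul {Ω : Type*} [MeasurableSpace Ω] {μ : Measure Ω}
    {f g : Ω → ℝ} (hf : MemLp f 2 μ) (hg : MemLp g 2 μ) :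
    Integrable (fun ω => f ω * g ω) μ := by
  have h := ((hf.integrable_sq).add (hg.integrable_sq)).div_const 2
  refine h.mono' (hf.aestronglyMeasurable.mul hg.aestronglyMeasurable) ?_
  refine Filter.Eventually.of_forall fun ω => ?_
  have h1 : ‖f ω * g ω‖ = |f ω| * |g ω| := by rw [norm_mul]; simp [Real.norm_eq_abs]
  have h2 : ((fun x => f x ^ 2) + fun x => g x ^ 2) ω / 2 = (f ω ^ 2 + g ω ^ 2) / 2 := by
    simp
  rw [h1, h2]
  nlinarith [sq_abs (f ω), sq_abs (g ω), sq_nonneg (|f ω| - |g ω|), abs_nonneg (f ω),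
    abs_nonneg (g ω)]

/-- **Proposition 2, probability part.** For the error system
`s_{k+1} = A_K s_k + w_k` with deterministic initial condition `s_0` and independent
disturbances with finite second moments, mean `μ_ω` and positive definite covariance `Σ_ω`,
with `R^ε_0 = {s_0}` and `R^ε_{k+1} = A_K R^ε_k ⊕ E(Σ_ω, μ_ω, n/ε)`, for every `k ≥ 1`,
`P(s_k ∈ R^ε_k) ≥ 1 − ε`. -/
theorem reach_set_confidence
    {Ω : Type*} [MeasurableSpace Ω] (ℙ : Measure Ω) [IsProbabilityMeasure ℙ]
    {n : ℕ} (AK : Matrix (Fin n) (Fin n) ℝ)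
    (w : ℕ → Ω → (Fin n → ℝ)) (hwmeas : ∀ k, Measurable (w k))
    (hwindep : ProbabilityTheory.iIndepFun w ℙ)
    (hw2 : ∀ k i, MemLp (fun ω => w k ω i) 2 ℙ)
    (μω : Fin n → ℝ) (hwmean : ∀ k i, ∫ ω, w k ω i ∂ℙ = μω i)
    (Sω : Matrix (Fin n) (Fin n) ℝ)
    (hwcov : ∀ k i j, ∫ ω, (w k ω i - μω i) * (w k ω j - μω j) ∂ℙ = Sω i j)
    (hSωpd : Sω.PosDef)
    (s0 : Fin n → ℝ) (s : ℕ → Ω → (Fin n → ℝ))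
    (hs0 : s 0 = fun _ => s0)
    (hs : ∀ k ω, s (k + 1) ω = AK.mulVec (s k ω) + w k ω)
    (ε : ℝ) (hε : ε ∈ Set.Ioo (0 : ℝ) 1)
    (R : ℕ → Set (Fin n → ℝ)) (hR0 : R 0 = {s0})
    (hR : ∀ k, R (k + 1) = AK.mulVec '' R k + ellipsoid Sω μω ((n : ℝ) / ε)) :
    ∀ k, 1 ≤ k → ENNReal.ofReal (1 - ε) ≤ ℙ {ω | s k ω ∈ R k} := by
  obtain ⟨hε0, hε1⟩ := hε
  set r : ℝ := (n : ℝ) / ε with hrdef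
  have hr0 : 0 ≤ r := div_nonneg (Nat.cast_nonneg n) hε0.le
  set Sc : ℕ → Matrix (Fin n) (Fin n) ℝ :=
    fun k => ∑ j ∈ Finset.range k, AK ^ j * Sω * (AK ^ j)ᵀ with hSdef
  set m : ℕ → (Fin n → ℝ) :=
    fun k => (AK ^ k).mulVec s0 + ∑ j ∈ Finset.range k, (AK ^ j).mulVec μω with hmdef
  have hSrec : ∀ k, Sc (k + 1) = AK * Sc k * AKᵀ + Sω := by
    intro k
    rw [hSdef]
    beta_reduce
    rw [Finset.sum_range_succ']
    have hA : ∀ j : ℕ, AK ^ (j + 1) * Sω * (AK ^ (j + 1))ᵀ = AK * (AK ^ j * Sω * (AK ^ j)ᵀ) * AKᵀ := by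
      intro j; rw [pow_succ', Matrix.transpose_mul]; noncomm_ring
    simp only [hA, pow_zero, Matrix.transpose_one, one_mul, mul_one]
    rw [Finset.mul_sum, Finset.sum_mul]
  have hmrec : ∀ k, m (k + 1) = AK.mulVec (m k) + μω := by
    intro k
    rw [hmdef]
    beta_reduce
    rw [Finset.sum_range_succ']
    rw [Matrix.mulVec_add, mulVec_finset_sum]
    simp only [pow_zero, pow_succ', Matrix.one_mulVec, ← Matrix.mulVec_mulVec]
    abel
  have hSpsd : ∀ k, (Sc k).PosSemidef := by
    intro k
    refine psd_finset_sum _ _ fun j _ => ?_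
    have := hSωpd.posSemidef.mul_mul_conjTranspose_same (AK ^ j)
    rwa [Matrix.conjTranspose_eq_transpose_of_trivial] at this
  have hSpd : ∀ k, (Sc (k + 1)).PosDef := by
    intro k
    rw [hSrec k]
    refine Matrix.PosDef.posSemidef_add ?_ hSωpd
    have := (hSpsd k).mul_mul_conjTranspose_same AK
    rwa [Matrix.conjTranspose_eq_transpose_of_trivial] at this
  have hincl : ∀ k, ellipsoid (Sc k) (m k) r ⊆ R k := by
    intro k
    induction k with
    | zero =>
      rw [hR0]
      rintro x ⟨y, _, rfl⟩
      have h0 : Sc 0 = 0 := by simp [hSdef]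
      have hm0 : m 0 = s0 := by simp [hmdef]
      rw [h0, hm0, msqrt_zero]
      simp
    | succ k ih =>
      rw [hSrec k, hmrec k, hR k]
      intro x hx
      have := ellipsoid_step_subset (hSpsd k) hSωpd AK (m k) μω hx
      exact Set.add_subset_add (Set.image_mono ih) Set.Subset.rfl this
  have hsol : ∀ k ω,
      s k ω = m k + ∑ j ∈ Finset.range k, (AK ^ (k - 1 - j)).mulVec (w j ω - μω) := by
    intro k
    induction k with
    | zero => intro ω; simp [hs0, hmdef]
    | succ k ih =>
      intro ω
      have hD : ∑ j ∈ Finset.range (k + 1), (AK ^ (k + 1 - 1 - j)).mulVec (w j ω - μω)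
          = AK.mulVec (∑ j ∈ Finset.range k, (AK ^ (k - 1 - j)).mulVec (w j ω - μω))
            + (w k ω - μω) := by
        rw [Finset.sum_range_succ, mulVec_finset_sum]
        congr 1
        · refine Finset.sum_congr rfl fun j hj => ?_
          have hj' : j < k := Finset.mem_range.mp hj
          have he : k + 1 - 1 - j = (k - 1 - j) + 1 := by omega
          rw [he, pow_succ', ← Matrix.mulVec_mulVec]
        · simp
      rw [hs k ω, ih ω, hmrec k, hD, Matrix.mulVec_add]
      abel
  intro k hk
  obtain ⟨k, rfl⟩ : ∃ k', k = k' + 1 := ⟨k - 1, by omega⟩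
  clear hk
  set B : ℕ → Matrix (Fin n) (Fin n) ℝ := fun j => AK ^ (k + 1 - 1 - j) with hBdef
  set v : ℕ → Ω → Fin n → ℝ := fun j ω => w j ω - μω with hvdef
  set Ee : ℕ → Ω → Fin n → ℝ := fun j ω => (B j).mulVec (v j ω) with hEdef
  set d : Ω → Fin n → ℝ := fun ω => ∑ j ∈ Finset.range (k + 1), Ee j ω with hddef
  set P : Matrix (Fin n) (Fin n) ℝ := (Sc (k + 1))⁻¹ with hPdef
  have hPpd : P.PosDef := (hSpd k).inv
  set q : Ω → ℝ := fun ω => d ω ⬝ᵥ P.mulVec (d ω) with hqdef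
  have hdsol : ∀ ω, s (k + 1) ω = m (k + 1) + d ω := fun ω => hsol (k + 1) ω
  have hsub : {ω | q ω ≤ r} ⊆ {ω | s (k + 1) ω ∈ R (k + 1)} := by
    intro ω hqω
    apply hincl (k + 1)
    apply mem_ellipsoid_of_quad (hSpd k)
    have hdl : s (k + 1) ω - m (k + 1) = d ω := by rw [hdsol ω]; abel
    rw [hdl]
    exact hqω
  -- measurability
  have hvmeas : ∀ j i, Measurable fun ω => v j ω i := fun j i =>
    ((measurable_pi_apply i).comp (hwmeas j)).sub measurable_const
  have hEapp : ∀ j a, (fun ω => Ee j ω a) = fun ω => ∑ c, B j a c * v j ω c := fun j a => rfl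
  have hdapp : ∀ a, (fun ω => d ω a) = fun ω => ∑ j ∈ Finset.range (k + 1), Ee j ω a := by
    intro a; funext ω; exact Finset.sum_apply a _ _
  have hdmeas : ∀ a, Measurable fun ω => d ω a := by
    intro a
    rw [hdapp a]
    refine Finset.measurable_sum _ fun j _ => ?_
    have := hEapp j a
    rw [this]
    exact Finset.measurable_sum _ fun c _ => (hvmeas j c).const_mul _
  have hq_exp : q = fun ω => ∑ a : Fin n, ∑ b : Fin n, P a b * (d ω a * d ω b) := by
    funext ω; exact dot_mulVec_expand P (d ω) (d ω)
  have hqmeas : Measurable q := by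
    rw [hq_exp]
    exact Finset.measurable_sum _ fun a _ => Finset.measurable_sum _ fun b _ =>
      ((hdmeas a).mul (hdmeas b)).const_mul _
  have hqnn : ∀ ω, 0 ≤ q ω := fun ω => psd_dot hPpd.posSemidef (d ω)
  -- integrability and moments
  have hv2 : ∀ j i, MemLp (fun ω => v j ω i) 2 ℙ := fun j i =>
    (hw2 j i).sub (memLp_const (μω i))
  have hvint : ∀ j i, Integrable (fun ω => v j ω i) ℙ := fun j i =>
    (hv2 j i).integrable one_le_two
  have hvmean : ∀ j i, ∫ ω, v j ω i ∂ℙ = 0 := by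
    intro j i
    have : ∫ ω, v j ω i ∂ℙ = (∫ ω, w j ω i ∂ℙ) - ∫ _ω, μω i ∂ℙ :=
      integral_sub ((hw2 j i).integrable one_le_two) (integrable_const (μω i))
    rw [this, hwmean j i]
    simp
  have hvcov : ∀ i j a b, ∫ ω, v i ω a * v j ω b ∂ℙ = if i = j then Sω a b else 0 := by
    intro i j a b
    by_cases hij : i = j
    · subst hij; rw [if_pos rfl]; exact hwcov i a b
    · rw [if_neg hij]
      have hind : ProbabilityTheory.IndepFun (fun ω => v i ω a) (fun ω => v j ω b) ℙ :=
        (hwindep.indepFun hij).comp (φ := fun x : Fin n → ℝ => x a - μω a)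
          (ψ := fun x : Fin n → ℝ => x b - μω b)
          ((measurable_pi_apply a).sub measurable_const)
          ((measurable_pi_apply b).sub measurable_const)
      have hmul := ProbabilityTheory.IndepFun.integral_fun_mul_eq_mul_integral hind
        (hvint i a).aestronglyMeasurable (hvint j b).aestronglyMeasurable
      have : ∫ ω, v i ω a * v j ω b ∂ℙ
          = (∫ ω, v i ω a ∂ℙ) * ∫ ω, v j ω b ∂ℙ := hmul
      rw [this, hvmean i a, zero_mul]
  have hE2 : ∀ j a, MemLp (fun ω => Ee j ω a) 2 ℙ := by
    intro j a
    rw [hEapp j a]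
    exact memLp_finset_sum _ fun c _ => (hv2 j c).const_mul _
  have hEint : ∀ i j a b, Integrable (fun ω => Ee i ω a * Ee j ω b) ℙ := fun i j a b =>
    memL2_integrable_mul (hE2 i a) (hE2 j b)
  have hECov : ∀ i j a b, ∫ ω, Ee i ω a * Ee j ω b ∂ℙ
      = if i = j then (B i * Sω * (B i)ᵀ) a b else 0 := by
    intro i j a b
    have hexp : (fun ω => Ee i ω a * Ee j ω b)
        = fun ω => ∑ c : Fin n, ∑ e : Fin n, (B i a c * B j b e) * (v i ω c * v j ω e) := by
      funext ω
      have h1 : Ee i ω a = ∑ c : Fin n, B i a c * v i ω c := congrFun (hEapp i a) ω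
      have h2 : Ee j ω b = ∑ e : Fin n, B j b e * v j ω e := congrFun (hEapp j b) ω
      rw [h1, h2, Finset.sum_mul_sum]
      exact Finset.sum_congr rfl fun c _ => Finset.sum_congr rfl fun e _ => by ring
    rw [hexp]
    have hint2 : ∀ (c e : Fin n), Integrable (fun ω => (B i a c * B j b e) * (v i ω c * v j ω e)) ℙ :=
      fun c e => (memL2_integrable_mul (hv2 i c) (hv2 j e)).const_mul _
    rw [integral_finset_sum _ fun c _ => integrable_finset_sum _ fun e _ => hint2 c e]
    have : ∀ c : Fin n, ∫ ω, (∑ e : Fin n, (B i a c * B j b e) * (v i ω c * v j ω e)) ∂ℙ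
        = ∑ e : Fin n, (B i a c * B j b e) * (if i = j then Sω c e else 0) := by
      intro c
      rw [integral_finset_sum _ fun e _ => hint2 c e]
      refine Finset.sum_congr rfl fun e _ => ?_
      rw [integral_const_mul, hvcov i j c e]
    rw [Finset.sum_congr rfl fun c _ => this c]
    by_cases hij : i = j
    · subst hij
      simp only [eq_self_iff_true, if_true]
      rw [Finset.sum_comm, Matrix.mul_apply]
      refine Finset.sum_congr rfl fun e _ => ?_
      rw [Matrix.mul_apply, Matrix.transpose_apply, Finset.sum_mul]
      exact Finset.sum_congr rfl fun c _ => by ring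
    · simp only [if_neg hij]
      simp
  have hdd_exp : ∀ a b : Fin n, (fun ω => d ω a * d ω b)
      = fun ω => ∑ i ∈ Finset.range (k + 1), ∑ j ∈ Finset.range (k + 1), Ee i ω a * Ee j ω b := by
    intro a b
    funext ω
    have h1 : d ω a = ∑ i ∈ Finset.range (k + 1), Ee i ω a := congrFun (hdapp a) ω
    have h2 : d ω b = ∑ j ∈ Finset.range (k + 1), Ee j ω b := congrFun (hdapp b) ω
    rw [h1, h2, Finset.sum_mul_sum]
  have hddint : ∀ a b : Fin n, Integrable (fun ω => d ω a * d ω b) ℙ := by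
    intro a b
    rw [hdd_exp a b]
    exact integrable_finset_sum _ fun i _ => integrable_finset_sum _ fun j _ => hEint i j a b
  have hdd : ∀ a b : Fin n, ∫ ω, d ω a * d ω b ∂ℙ = Sc (k + 1) a b := by
    intro a b
    rw [hdd_exp a b]
    rw [integral_finset_sum _ fun i _ => integrable_finset_sum _ fun j _ => hEint i j a b]
    have h1 : ∀ i ∈ Finset.range (k + 1),
        ∫ ω, (∑ j ∈ Finset.range (k + 1), Ee i ω a * Ee j ω b) ∂ℙ
        = (B i * Sω * (B i)ᵀ) a b := by
      intro i hi
      rw [integral_finset_sum _ fun j _ => hEint i j a b]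
      rw [Finset.sum_congr rfl fun j _ => hECov i j a b]
      rw [Finset.sum_ite_eq (Finset.range (k + 1)) i fun _ => (B i * Sω * (B i)ᵀ) a b]
      rw [if_pos hi]
    rw [Finset.sum_congr rfl h1]
    have h2 : ∑ i ∈ Finset.range (k + 1), (B i * Sω * (B i)ᵀ) a b
        = (∑ i ∈ Finset.range (k + 1), B i * Sω * (B i)ᵀ) a b := by
      exact (Matrix.sum_apply a b _ _).symm
    rw [h2]
    have h3 : ∑ i ∈ Finset.range (k + 1), B i * Sω * (B i)ᵀ = Sc (k + 1) := by
      rw [hSdef]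
      beta_reduce
      exact Finset.sum_range_reflect (fun i => AK ^ i * Sω * (AK ^ i)ᵀ) (k + 1)
    rw [h3]
  have hqint : Integrable q ℙ := by
    rw [hq_exp]
    exact integrable_finset_sum _ fun a _ => integrable_finset_sum _ fun b _ =>
      (hddint a b).const_mul _
  have hqval : ∫ ω, q ω ∂ℙ = (n : ℝ) := by
    have e1 : ∫ ω, q ω ∂ℙ = ∑ a : Fin n, ∑ b : Fin n, P a b * Sc (k + 1) a b := by
      rw [hq_exp]
      beta_reduce
      refine (integral_finset_sum _ fun a _ => integrable_finset_sum _ fun b _ =>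
        (hddint a b).const_mul _).trans ?_
      refine Finset.sum_congr rfl fun a _ => ?_
      rw [integral_finset_sum _ fun b _ => (hddint a b).const_mul _]
      refine Finset.sum_congr rfl fun b _ => ?_
      rw [integral_const_mul, hdd a b]
    have hsymm : ∀ a b : Fin n, Sc (k + 1) a b = Sc (k + 1) b a := by
      intro a b
      have ht := herm_transpose (hSpsd (k + 1)).isHermitian
      conv_lhs => rw [← ht]
      exact Matrix.transpose_apply _ a b
    have e2 : ∑ a : Fin n, ∑ b : Fin n, P a b * Sc (k + 1) a b = Matrix.trace (P * Sc (k + 1)) := by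
      rw [Matrix.trace]
      refine Finset.sum_congr rfl fun a _ => ?_
      rw [Matrix.diag_apply, Matrix.mul_apply]
      exact Finset.sum_congr rfl fun b _ => by rw [hsymm a b]
    have e3 : P * Sc (k + 1) = 1 := by
      rw [hPdef]
      exact Matrix.nonsing_inv_mul _
        ((Matrix.isUnit_iff_isUnit_det _).mp (Matrix.PosDef.isUnit (hSpd k)))
    rw [e1, e2, e3, Matrix.trace_one]
    simp
  rcases Nat.eq_zero_or_pos n with hn | hn
  · have hqr : ∀ ω, q ω ≤ r := by
      intro ω
      have hempty : IsEmpty (Fin n) := by rw [hn]; infer_instance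
      have : q ω = 0 := by
        rw [hqdef]
        beta_reduce
        rw [dotProduct]
        simp
      rw [this]; exact hr0
    calc ENNReal.ofReal (1 - ε) ≤ 1 := ENNReal.ofReal_le_one.mpr (by linarith)
      _ = ℙ Set.univ := measure_univ.symm
      _ ≤ ℙ {ω | s (k + 1) ω ∈ R (k + 1)} := measure_mono fun ω _ => hsub (hqr ω)
  · have hrpos : 0 < r := by
      rw [hrdef]
      exact div_pos (by exact_mod_cast hn) hε0
    have hmarkov := mul_meas_ge_le_integral_of_nonneg (ae_of_all ℙ hqnn) hqint r
    rw [hqval] at hmarkov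
    have h1 : (ℙ {x | r ≤ q x}).toReal ≤ ε := by
      have h2 : (n : ℝ) / r = ε := by
        rw [hrdef]
        field_simp
      rw [← h2]
      rw [le_div_iff₀ hrpos]
      rw [measureReal_def] at hmarkov
      linarith [hmarkov]
    have hT : ℙ {x | r ≤ q x} ≤ ENNReal.ofReal ε :=
      (ENNReal.le_ofReal_iff_toReal_le (measure_ne_top _ _) hε0.le).mpr h1
    have hmeasT : MeasurableSet {x | r ≤ q x} := measurableSet_le measurable_const hqmeas
    calc ENNReal.ofReal (1 - ε) = 1 - ENNReal.ofReal ε := by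
          rw [ENNReal.ofReal_sub _ hε0.le, ENNReal.ofReal_one]
      _ ≤ 1 - ℙ {x | r ≤ q x} := tsub_le_tsub_left hT 1
      _ = ℙ {x | r ≤ q x}ᶜ := (prob_compl_eq_one_sub hmeasT).symm
      _ ≤ ℙ {ω | s (k + 1) ω ∈ R (k + 1)} := by
          refine measure_mono fun ω hω => ?_
          have hω' : ¬ r ≤ q ω := hω
          exact hsub (not_le.mp hω').le
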